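/- Feller's accessibility criterion for the boundary 0 of the Wright–Fisher diffusion: with scale density n'(x) = C(x)·x^{-2μ2}(1-x)^{-2μ1} and speed density m'(x) = (4/(x(1-x)))·C(x)^{-1}·x^{2μ2}(1-x)^{2μ1} where C(x) = exp(-∫_c^x 2s(z)dz), the quantity u(0) = ∫_0^c m(x) n'(x) dx (with m(x) = ∫_c^x m'(y)dy) is finite if μ2 < 1/2 and infinite if μ2 ≥ 1/2. -/

import Mathlib

open Set MeasureTheory Real

private lemma aux_rpow_le_max {a b y t : ℝ} (ha : 0 < a) (h1 : a ≤ y) (h2 : y ≤ b) :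
    y ^ t ≤ max (a ^ t) (b ^ t) := by
  rcases le_total 0 t with ht | ht
  · exact le_max_of_le_right (Real.rpow_le_rpow (ha.le.trans h1) h2 ht)
  · exact le_max_of_le_left (Real.rpow_le_rpow_of_nonpos ha h1 ht)

private lemma aux_min_le_rpow {a b y t : ℝ} (ha : 0 < a) (h1 : a ≤ y) (h2 : y ≤ b) :
    min (a ^ t) (b ^ t) ≤ y ^ t := by
  rcases le_total 0 t with ht | ht
  · exact min_le_of_left_le (Real.rpow_le_rpow ha.le h1 ht)
  · exact min_le_of_right_le (Real.rpow_le_rpow_of_nonpos (ha.trans_le h1) h2 ht)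

/-- Feller's accessibility criterion for the boundary `0` of the Wright–Fisher diffusion:
with scale density `n'(x) = C(x)x^{-2μ2}(1-x)^{-2μ1}` and speed measure density
`m'(x) = (4/(x(1-x))) C(x)⁻¹ x^{2μ2}(1-x)^{2μ1}`, where `C(x) = exp(-∫_c^x 2s)`, the
quantity `u(0) = ∫_0^c m(x)n'(x) dx` (with `m(x) = ∫_c^x m'`) is finite iff `μ2 < 1/2`. -/
theorem wright_fisher_feller_boundary_criterion (s : ℝ → ℝ)
    (hs_cont : ContinuousOn s (Set.Icc 0 1)) (hs_bdd : ∃ M, ∀ x ∈ Set.Icc (0:ℝ) 1, |s x| ≤ M)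
    (μ1 μ2 c : ℝ) (hμ1 : 0 < μ1) (hμ2 : 0 < μ2) (hc : c ∈ Set.Ioo (0:ℝ) (1/2))
    (C n' m' m : ℝ → ℝ)
    (hC : ∀ x, C x = Real.exp (-∫ z in c..x, 2 * s z))
    (hn' : ∀ x, n' x = C x * x ^ (-(2 * μ2)) * (1 - x) ^ (-(2 * μ1)))
    (hm' : ∀ x, m' x = (4 / (x * (1 - x))) * (C x)⁻¹ * x ^ (2 * μ2) * (1 - x) ^ (2 * μ1))
    (hm : ∀ x, m x = ∫ y in c..x, m' y) :
    (μ2 < 1/2 →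
      MeasureTheory.IntegrableOn (fun x => m x * n' x) (Set.Ioc 0 c)) ∧
    (1/2 ≤ μ2 →
      ¬ MeasureTheory.IntegrableOn (fun x => m x * n' x) (Set.Ioc 0 c)) := by
  obtain ⟨hc0, hc1⟩ := hc
  have hc2 : c < 1 := by linarith
  obtain ⟨M0, hM0⟩ := hs_bdd
  set M := max M0 0 with hMdef
  have hM : ∀ x ∈ Set.Icc (0:ℝ) 1, |s x| ≤ M := fun x hx => (hM0 x hx).trans (le_max_left _ _)
  have hMnn : (0:ℝ) ≤ M := le_max_right _ _
  have hcmem : c ∈ Icc (0:ℝ) 1 := ⟨hc0.le, hc2.le⟩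
  -- integrability of 2*s on subintervals of [0,1]
  have hs_int : ∀ a b : ℝ, a ∈ Icc (0:ℝ) 1 → b ∈ Icc (0:ℝ) 1 →
      IntervalIntegrable (fun z => 2 * s z) volume a b := by
    intro a b ha hb
    apply ContinuousOn.intervalIntegrable
    apply (continuousOn_const.mul hs_cont).mono
    intro y hy
    constructor
    · exact le_trans (le_min ha.1 hb.1) hy.1
    · exact le_trans hy.2 (max_le ha.2 hb.2)
  -- bound on the exponent integral
  have habsI : ∀ x ∈ Icc (0:ℝ) 1, |∫ z in c..x, 2 * s z| ≤ 2 * M := by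
    intro x hx
    have h1 : ∀ y ∈ Set.uIoc c x, ‖2 * s y‖ ≤ 2 * M := by
      intro y hy
      have hy' : y ∈ Icc (0:ℝ) 1 := by
        constructor
        · exact (le_min hc0.le hx.1).trans hy.1.le
        · exact hy.2.trans (max_le hc2.le hx.2)
      rw [Real.norm_eq_abs, abs_mul, abs_two]
      have := hM y hy'
      linarith
    have h2 := intervalIntegral.norm_integral_le_of_norm_le_const h1
    rw [Real.norm_eq_abs] at h2
    have h3 : |x - c| ≤ 1 := by
      rw [abs_le]; constructor <;> linarith [hx.1, hx.2]
    nlinarith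
  have hCpos : ∀ x, 0 < C x := fun x => (hC x) ▸ Real.exp_pos _
  have hCle : ∀ x ∈ Icc (0:ℝ) 1, C x ≤ Real.exp (2 * M) := by
    intro x hx
    rw [hC x]
    apply Real.exp_le_exp.mpr
    have := (abs_le.mp (habsI x hx)).1
    linarith
  have hCge : ∀ x ∈ Icc (0:ℝ) 1, Real.exp (-(2 * M)) ≤ C x := by
    intro x hx
    rw [hC x]
    apply Real.exp_le_exp.mpr
    have := (abs_le.mp (habsI x hx)).2
    linarith
  -- continuity of C
  have hCcont : ∀ a : ℝ, 0 ≤ a → a ≤ c → ContinuousOn C (Icc a c) := by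
    intro a ha hac
    have h1 : ContinuousOn (fun x => ∫ z in c..x, 2 * s z) (Icc a c) := by
      have h2 := intervalIntegral.continuousOn_primitive_interval'
        (hs_int a c ⟨ha, by linarith⟩ hcmem)
        (a := c) (by rw [uIcc_of_le hac]; exact ⟨hac, le_refl c⟩)
      rwa [uIcc_of_le hac] at h2
    exact (Real.continuous_exp.comp_continuousOn h1.neg).congr (fun x _ => hC x)
  -- rewrite of m'
  have hm'_eq : ∀ y : ℝ, 0 < y → y < 1 →
      m' y = 4 * (C y)⁻¹ * y ^ (2 * μ2 - 1) * (1 - y) ^ (2 * μ1 - 1) := by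
    intro y hy0 hy1
    have hy1' : (0:ℝ) < 1 - y := by linarith
    have hCne : C y ≠ 0 := (hCpos y).ne'
    rw [hm' y, show (2 * μ2) = (2 * μ2 - 1) + 1 by ring,
        show (2 * μ1) = (2 * μ1 - 1) + 1 by ring,
        Real.rpow_add hy0, Real.rpow_add hy1', Real.rpow_one]
    field_simp
    rw [Real.rpow_one]
    ring
  have hm'_pos : ∀ y ∈ Ioc (0:ℝ) c, 0 < m' y := by
    intro y hy
    have hy0 := hy.1
    have hy1 : y < 1 := by linarith [hy.2]
    have h1 : (0:ℝ) < 1 - y := by linarith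
    have h2 := hCpos y
    rw [hm' y]
    positivity
  set K1 := max ((1 - c) ^ (2 * μ1 - 1)) ((1:ℝ) ^ (2 * μ1 - 1)) with hK1def
  have hK1pos : 0 < K1 := lt_max_of_lt_right (by rw [Real.one_rpow]; norm_num)
  set A := 4 * Real.exp (2 * M) * K1 with hAdef
  have hApos : 0 < A := by positivity
  have hm'_le : ∀ y ∈ Ioc (0:ℝ) c, m' y ≤ A * y ^ (2 * μ2 - 1) := by
    intro y hy
    have hy0 := hy.1
    have hy1 : y < 1 := by linarith [hy.2]
    rw [hm'_eq y hy0 hy1]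
    have h1 : (C y)⁻¹ ≤ Real.exp (2 * M) := by
      have h2 := hCge y ⟨hy0.le, hy1.le⟩
      have h3 : (C y)⁻¹ ≤ (Real.exp (-(2 * M)))⁻¹ :=
        inv_anti₀ (Real.exp_pos _) h2
      rwa [Real.exp_neg, inv_inv] at h3
    have h2 : (1 - y) ^ (2 * μ1 - 1) ≤ K1 :=
      aux_rpow_le_max (by linarith) (by linarith [hy.2]) (by linarith)
    have hy1' : (0:ℝ) < 1 - y := by linarith
    calc 4 * (C y)⁻¹ * y ^ (2 * μ2 - 1) * (1 - y) ^ (2 * μ1 - 1)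
        ≤ 4 * Real.exp (2 * M) * y ^ (2 * μ2 - 1) * K1 := by
          gcongr <;> first
            | exact h1
            | exact h2
            | exact inv_nonneg.mpr (hCpos y).le
            | exact Real.rpow_nonneg hy0.le _
            | exact Real.rpow_nonneg hy1'.le _
            | positivity
      _ = A * y ^ (2 * μ2 - 1) := by rw [hAdef]; ring
  -- continuity of m'
  have hm'_cont : ∀ a : ℝ, 0 < a → a ≤ c → ContinuousOn m' (Icc a c) := by
    intro a ha hac
    have g1 : ContinuousOn (fun y : ℝ => 4 / (y * (1 - y))) (Icc a c) := by
      apply continuousOn_const.div (continuousOn_id.mul (continuousOn_const.sub continuousOn_id))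
      intro y hy
      have h1 : 0 < y := lt_of_lt_of_le ha hy.1
      have h2 : y < 1 := by linarith [hy.2]
      have : 0 < y * (1 - y) := by nlinarith
      exact this.ne'
    have g2 : ContinuousOn (fun y : ℝ => (C y)⁻¹) (Icc a c) :=
      (hCcont a ha.le hac).inv₀ (fun y _ => (hCpos y).ne')
    have g3 : ContinuousOn (fun y : ℝ => y ^ (2 * μ2)) (Icc a c) := fun y hy =>
      (Real.continuousAt_rpow_const y _ (Or.inl (lt_of_lt_of_le ha hy.1).ne')).continuousWithinAt
    have g4 : ContinuousOn (fun y : ℝ => (1 - y) ^ (2 * μ1)) (Icc a c) := by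
      intro y hy
      have h2 : (1:ℝ) - y ≠ 0 := sub_ne_zero.mpr (ne_of_gt (show (1:ℝ) > y by linarith [hy.2]))
      exact ((Real.continuousAt_rpow_const (1 - y) _ (Or.inl h2)).comp
        ((continuous_const.sub continuous_id).continuousAt)).continuousWithinAt
    exact (((g1.mul g2).mul g3).mul g4).congr (fun y _ => hm' y)
  have hm'_intv : ∀ x : ℝ, 0 < x → x ≤ c → IntervalIntegrable m' volume x c := by
    intro x hx hxc
    apply ContinuousOn.intervalIntegrable
    rw [uIcc_of_le hxc]
    exact hm'_cont x hx hxc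
  -- basic facts on m
  have hm_neg_eq : ∀ x, m x = -∫ y in x..c, m' y := by
    intro x
    rw [hm x, intervalIntegral.integral_symm]
  set B := A * (c ^ (2 * μ2) / (2 * μ2)) with hBdef
  have hBnn : 0 ≤ B :=
    mul_nonneg hApos.le (div_nonneg (Real.rpow_nonneg hc0.le _) (by linarith))
  have hmB : ∀ x ∈ Ioc (0:ℝ) c, 0 ≤ -m x ∧ -m x ≤ B := by
    intro x hx
    rw [hm_neg_eq x, neg_neg]
    constructor
    · apply intervalIntegral.integral_nonneg hx.2
      intro u hu
      exact (hm'_pos u ⟨lt_of_lt_of_le hx.1 hu.1, hu.2⟩).le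
    · have hint1 := hm'_intv x hx.1 hx.2
      have hint2 : IntervalIntegrable (fun y : ℝ => A * y ^ (2 * μ2 - 1)) volume x c :=
        (intervalIntegral.intervalIntegrable_rpow' (by linarith)).const_mul A
      calc (∫ y in x..c, m' y)
          ≤ ∫ y in x..c, A * y ^ (2 * μ2 - 1) :=
            intervalIntegral.integral_mono_on hx.2 hint1 hint2
              (fun y hy => hm'_le y ⟨lt_of_lt_of_le hx.1 hy.1, hy.2⟩)
        _ = A * ((c ^ (2 * μ2) - x ^ (2 * μ2)) / (2 * μ2)) := by
            rw [intervalIntegral.integral_const_mul, integral_rpow (Or.inl (by linarith)),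
              show 2 * μ2 - 1 + 1 = 2 * μ2 by ring]
        _ ≤ B := by
            rw [hBdef]
            have := Real.rpow_nonneg hx.1.le (2 * μ2)
            gcongr
            linarith
  have hc2pos : (0:ℝ) < c / 2 := by linarith
  set K := ∫ y in (c/2)..c, m' y with hKdef
  have hKpos : 0 < K :=
    intervalIntegral.intervalIntegral_pos_of_pos_on (hm'_intv (c/2) hc2pos (by linarith))
      (fun y hy => hm'_pos y ⟨lt_trans hc2pos hy.1, hy.2.le⟩) (by linarith)
  have hm_lb : ∀ x ∈ Ioc (0:ℝ) (c/2), K ≤ -m x := by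
    intro x hx
    rw [hm_neg_eq x, neg_neg, hKdef]
    apply intervalIntegral.integral_mono_interval hx.2 (by linarith) (le_refl c)
    · filter_upwards [ae_restrict_mem measurableSet_Ioc] with y hy
      exact (hm'_pos y ⟨lt_trans hx.1 hy.1, hy.2⟩).le
    · exact hm'_intv x hx.1 (by linarith [hx.2])
  -- bounds on n'
  set K2 := max ((1 - c) ^ (-(2 * μ1))) ((1:ℝ) ^ (-(2 * μ1))) with hK2def
  set K3 := min ((1 - c) ^ (-(2 * μ1))) ((1:ℝ) ^ (-(2 * μ1))) with hK3def
  have hK2pos : 0 < K2 := lt_max_of_lt_right (by rw [Real.one_rpow]; norm_num)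
  have hK3pos : 0 < K3 :=
    lt_min (Real.rpow_pos_of_pos (by linarith) _) (Real.rpow_pos_of_pos one_pos _)
  have hn'_pos : ∀ x ∈ Ioc (0:ℝ) c, 0 < n' x := by
    intro x hx
    have h0 := hx.1
    have h1 : (0:ℝ) < 1 - x := by linarith [hx.2]
    have h2 := hCpos x
    rw [hn' x]
    positivity
  have hn'_le : ∀ x ∈ Ioc (0:ℝ) c, n' x ≤ (Real.exp (2 * M) * K2) * x ^ (-(2 * μ2)) := by
    intro x hx
    have hx1 : x < 1 := by linarith [hx.2]
    rw [hn' x]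
    have h1 : C x ≤ Real.exp (2 * M) := hCle x ⟨hx.1.le, hx1.le⟩
    have h2 : (1 - x) ^ (-(2 * μ1)) ≤ K2 :=
      aux_rpow_le_max (by linarith) (by linarith [hx.2]) (by linarith [hx.1])
    have hx0 : 0 < x := hx.1
    have h1x : (0:ℝ) < 1 - x := by linarith
    calc C x * x ^ (-(2 * μ2)) * (1 - x) ^ (-(2 * μ1))
        ≤ Real.exp (2 * M) * x ^ (-(2 * μ2)) * K2 := by
          gcongr <;> first
            | exact h1
            | exact h2
            | exact (hCpos x).le
            | exact hK2pos.le
            | exact Real.rpow_nonneg hx0.le _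
            | exact Real.rpow_nonneg h1x.le _
            | positivity
      _ = (Real.exp (2 * M) * K2) * x ^ (-(2 * μ2)) := by ring
  have hn'_ge : ∀ x ∈ Ioc (0:ℝ) c,
      (Real.exp (-(2 * M)) * K3) * x ^ (-(2 * μ2)) ≤ n' x := by
    intro x hx
    have hx1 : x < 1 := by linarith [hx.2]
    rw [hn' x]
    have h1 : Real.exp (-(2 * M)) ≤ C x := hCge x ⟨hx.1.le, hx1.le⟩
    have h2 : K3 ≤ (1 - x) ^ (-(2 * μ1)) :=
      aux_min_le_rpow (by linarith) (by linarith [hx.2]) (by linarith [hx.1])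
    calc (Real.exp (-(2 * M)) * K3) * x ^ (-(2 * μ2))
        = Real.exp (-(2 * M)) * x ^ (-(2 * μ2)) * K3 := by ring
      _ ≤ C x * x ^ (-(2 * μ2)) * (1 - x) ^ (-(2 * μ1)) := by
          have hx0 : 0 < x := hx.1
          gcongr <;> first
            | exact h1
            | exact h2
            | exact (Real.exp_pos _).le
            | exact hK3pos.le
            | exact Real.rpow_nonneg hx0.le _
            | exact mul_nonneg (hCpos x).le (Real.rpow_nonneg hx0.le _)
            | positivity
  -- continuity of m and n' on (0, c]
  have hm_cont : ContinuousOn m (Ioc 0 c) := by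
    intro x hx
    have hx2 : 0 < x / 2 := by linarith [hx.1]
    have hx2c : x / 2 ≤ c := by linarith [hx.2]
    have h1 : ContinuousOn m (Icc (x/2) c) := by
      have h2 := intervalIntegral.continuousOn_primitive_interval'
        (hm'_intv (x/2) hx2 hx2c) (a := c) (by rw [uIcc_of_le hx2c]; exact ⟨hx2c, le_refl c⟩)
      rw [uIcc_of_le hx2c] at h2
      exact h2.congr (fun y _ => hm y)
    apply (h1 x ⟨by linarith [hx.1], hx.2⟩).mono_of_mem_nhdsWithin
    apply mem_nhdsWithin.mpr
    exact ⟨Ioi (x/2), isOpen_Ioi, by simp; linarith [hx.1],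
      fun y hy => ⟨hy.1.le, hy.2.2⟩⟩
  have hn'_cont : ContinuousOn n' (Ioc 0 c) := by
    intro x hx
    have hx2 : 0 < x / 2 := by linarith [hx.1]
    have hx2c : x / 2 ≤ c := by linarith [hx.2]
    have h1 : ContinuousOn n' (Icc (x/2) c) := by
      have g2 := hCcont (x/2) hx2.le hx2c
      have g3 : ContinuousOn (fun y : ℝ => y ^ (-(2 * μ2))) (Icc (x/2) c) := fun y hy =>
        (Real.continuousAt_rpow_const y _ (Or.inl (lt_of_lt_of_le hx2 hy.1).ne')).continuousWithinAt
      have g4 : ContinuousOn (fun y : ℝ => (1 - y) ^ (-(2 * μ1))) (Icc (x/2) c) := by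
        intro y hy
        have h2 : (1:ℝ) - y ≠ 0 := sub_ne_zero.mpr (ne_of_gt (show (1:ℝ) > y by linarith [hy.2]))
        exact ((Real.continuousAt_rpow_const (1 - y) _ (Or.inl h2)).comp
          ((continuous_const.sub continuous_id).continuousAt)).continuousWithinAt
      exact (((g2.mul g3).mul g4)).congr (fun y _ => hn' y)
    apply (h1 x ⟨by linarith [hx.1], hx.2⟩).mono_of_mem_nhdsWithin
    apply mem_nhdsWithin.mpr
    exact ⟨Ioi (x/2), isOpen_Ioi, by simp; linarith [hx.1],
      fun y hy => ⟨hy.1.le, hy.2.2⟩⟩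
  have hg_meas : AEStronglyMeasurable (fun x => m x * n' x) (volume.restrict (Ioc (0:ℝ) c)) :=
    (hm_cont.mul hn'_cont).aestronglyMeasurable measurableSet_Ioc
  constructor
  · -- integrable case
    intro hμ
    have hrint : IntegrableOn (fun x : ℝ => (B * (Real.exp (2 * M) * K2)) * x ^ (-(2 * μ2)))
        (Ioc 0 c) := by
      have h1 : IntervalIntegrable (fun x : ℝ => x ^ (-(2 * μ2))) volume 0 c :=
        intervalIntegral.intervalIntegrable_rpow' (by linarith)
      rw [intervalIntegrable_iff_integrableOn_Ioc_of_le hc0.le] at h1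
      exact h1.const_mul _
    apply Integrable.mono' hrint hg_meas
    rw [ae_restrict_iff' measurableSet_Ioc]
    refine ae_of_all _ (fun x hx => ?_)
    have h1 := hmB x hx
    have h2 := hn'_le x hx
    have h3 := hn'_pos x hx
    rw [Real.norm_eq_abs, abs_mul, abs_of_nonpos (by linarith [h1.1]), abs_of_pos h3]
    calc (-m x) * n' x
        ≤ B * ((Real.exp (2 * M) * K2) * x ^ (-(2 * μ2))) :=
          mul_le_mul h1.2 h2 h3.le hBnn
      _ = (B * (Real.exp (2 * M) * K2)) * x ^ (-(2 * μ2)) := by ring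
  · -- non-integrable case
    intro hμ hint
    set K' := K * (Real.exp (-(2 * M)) * K3) with hK'def
    have hK'pos : 0 < K' := mul_pos hKpos (mul_pos (Real.exp_pos _) hK3pos)
    have h2 : IntegrableOn (fun x => m x * n' x) (Ioc 0 (c/2)) :=
      hint.mono_set (Ioc_subset_Ioc_right (by linarith))
    have hmeas : AEStronglyMeasurable (fun x : ℝ => K' * x ^ (-(2 * μ2)))
        (volume.restrict (Ioc (0:ℝ) (c/2))) := by
      apply ContinuousOn.aestronglyMeasurable ?_ measurableSet_Ioc
      intro x hx
      exact (continuousAt_const.mul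
        (Real.continuousAt_rpow_const x _ (Or.inl hx.1.ne'))).continuousWithinAt
    have h3 : IntegrableOn (fun x : ℝ => K' * x ^ (-(2 * μ2))) (Ioc 0 (c/2)) := by
      apply Integrable.mono' h2.norm hmeas
      rw [ae_restrict_iff' measurableSet_Ioc]
      refine ae_of_all _ (fun x hx => ?_)
      have hx' : x ∈ Ioc (0:ℝ) c := ⟨hx.1, hx.2.trans (by linarith)⟩
      have h4 := hm_lb x hx
      have h5 := hn'_ge x hx'
      have h6 := hn'_pos x hx'
      have h7 := hmB x hx'
      have hrp : (0:ℝ) ≤ x ^ (-(2 * μ2)) := Real.rpow_nonneg hx.1.le _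
      rw [Real.norm_eq_abs, Real.norm_eq_abs,
        abs_of_nonneg (mul_nonneg hK'pos.le hrp), abs_mul,
        abs_of_nonpos (show m x ≤ 0 by linarith [h7.1]), abs_of_pos h6]
      calc K' * x ^ (-(2 * μ2))
          = K * ((Real.exp (-(2 * M)) * K3) * x ^ (-(2 * μ2))) := by rw [hK'def]; ring
        _ ≤ (-m x) * n' x :=
            mul_le_mul h4 h5 (mul_nonneg (mul_nonneg (Real.exp_pos _).le hK3pos.le) hrp)
              (by linarith [h7.1, h4])
    have h8 : IntegrableOn (fun x : ℝ => x ^ (-(2 * μ2))) (Ioc 0 (c/2)) := by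
      have h9 := h3.const_mul K'⁻¹
      have heq : (fun x : ℝ => K'⁻¹ * (K' * x ^ (-(2 * μ2)))) = fun x : ℝ => x ^ (-(2 * μ2)) := by
        funext x
        rw [← mul_assoc, inv_mul_cancel₀ hK'pos.ne', one_mul]
      rwa [heq] at h9
    rw [integrableOn_Ioc_iff_integrableOn_Ioo,
      intervalIntegral.integrableOn_Ioo_rpow_iff hc2pos] at h8
    linarith
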